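/- For all n ≥ 1 and real x, ∑_{k=1}^{n} C(n,k-1) (1-λ)_{n-k,λ} F_{k,λ}(x) = ∑_{k=0}^{n} C(n,k) (1-λ)_{n-k,λ} x F'_{k,λ}(x), where F'_{k,λ} denotes the x-derivative of F_{k,λ}. -/

import Mathlib

open Finset

/-- Generalized falling factorial `(x)_{n,lam} = x(x-lam)...(x-(n-1)lam)`. -/
noncomputable def dfall (lam x : ℝ) (n : ℕ) : ℝ := ∏ i ∈ Finset.range n, (x - i * lam)

/-- Generalized rising factorial `⟨x⟩_{n,lam} = x(x+lam)...(x+(n-1)lam)`. -/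
noncomputable def drise (lam x : ℝ) (n : ℕ) : ℝ := ∏ i ∈ Finset.range n, (x + i * lam)

lemma dfall_zero (lam x : ℝ) : dfall lam x 0 = 1 := by simp [dfall]

lemma dfall_succ (lam x : ℝ) (n : ℕ) :
    dfall lam x (n + 1) = dfall lam x n * (x - n * lam) := by
  simp [dfall, Finset.prod_range_succ]

lemma dfall_succ' (lam x : ℝ) (n : ℕ) :
    dfall lam x (n + 1) = x * dfall lam (x - lam) n := by
  rw [dfall, Finset.prod_range_succ', dfall]
  simp only [Nat.cast_zero, zero_mul, sub_zero, Nat.cast_add, Nat.cast_one]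
  rw [mul_comm]
  congr 1
  exact Finset.prod_congr rfl fun i _ => by ring

/-- Vandermonde convolution for generalized falling factorials. -/
lemma dfall_vander (lam x y : ℝ) (n : ℕ) : dfall lam (x + y) n =
    ∑ k ∈ range (n + 1), (n.choose k : ℝ) * dfall lam x k * dfall lam y (n - k) := by
  induction n with
  | zero => simp [dfall]
  | succ n ih =>
    rw [dfall_succ, ih]
    rw [Finset.sum_range_succ'
      (fun k => ((n+1).choose k : ℝ) * dfall lam x k * dfall lam y (n+1-k))]
    have hA : ∀ k ∈ range (n+1),
        (((n+1).choose (k+1) : ℝ) * dfall lam x (k+1) * dfall lam y (n+1-(k+1)))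
          = (n.choose k : ℝ) * dfall lam x (k+1) * dfall lam y (n-k)
            + (n.choose (k+1) : ℝ) * dfall lam x (k+1) * dfall lam y (n+1-(k+1)) := by
      intro k hk
      have h1 : n + 1 - (k+1) = n - k := by omega
      rw [h1, Nat.choose_succ_succ]
      push_cast
      ring
    rw [Finset.sum_congr rfl hA, Finset.sum_add_distrib]
    have hg0 : (((n+1).choose 0 : ℕ) : ℝ) = ((n.choose 0 : ℕ) : ℝ) := by simp
    rw [add_assoc, hg0]
    have hB : (∑ k ∈ range (n+1), (n.choose (k+1) : ℝ) * dfall lam x (k+1)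
          * dfall lam y (n+1-(k+1)))
        + (n.choose 0 : ℝ) * dfall lam x 0 * dfall lam y (n+1-0)
        = ∑ k ∈ range (n+1), (n.choose k : ℝ) * dfall lam x k * dfall lam y (n+1-k) := by
      rw [← Finset.sum_range_succ'
        (fun k => (n.choose k : ℝ) * dfall lam x k * dfall lam y (n+1-k))]
      rw [Finset.sum_range_succ]
      simp [Nat.choose_succ_self]
    rw [hB, ← Finset.sum_add_distrib, Finset.sum_mul]
    refine Finset.sum_congr rfl fun k hk => ?_
    have hk' : k ≤ n := Nat.lt_succ_iff.mp (mem_range.mp hk)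
    have h2 : n + 1 - k = (n - k) + 1 := by omega
    rw [h2, dfall_succ lam x k, dfall_succ lam y (n-k)]
    have h3 : ((n - k : ℕ) : ℝ) = (n : ℝ) - (k : ℝ) := by
      push_cast [Nat.cast_sub hk']; ring
    rw [h3]
    ring

lemma dfall_one_nat_ne (k : ℕ) : dfall 1 (k : ℝ) k ≠ 0 := by
  unfold dfall
  rw [Finset.prod_ne_zero_iff]
  intro i hi
  have : (i : ℝ) < k := by exact_mod_cast mem_range.mp hi
  intro h
  rw [mul_one, sub_eq_zero] at h
  exact absurd h.symm (ne_of_lt this)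

lemma dfall_one_nat_zero {k i : ℕ} (h : k < i) : dfall 1 (k : ℝ) i = 0 := by
  unfold dfall
  apply Finset.prod_eq_zero (Finset.mem_range.mpr h)
  simp

lemma dfall_indep (m : ℕ) (c : ℕ → ℝ)
    (h : ∀ y : ℝ, ∑ k ∈ range m, c k * dfall 1 y k = 0) :
    ∀ k, k < m → c k = 0 := by
  intro k
  induction k using Nat.strong_induction_on with
  | _ k ih =>
    intro hk
    have h0 := h (k : ℝ)
    rw [Finset.sum_eq_single k ?h1 ?h2] at h0
    · exact (mul_eq_zero.mp h0).resolve_right (dfall_one_nat_ne k)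
    case h1 =>
      intro b hb hbk
      rcases lt_or_gt_of_ne hbk with hlt | hgt
      · rw [ih b hlt (lt_trans hlt hk), zero_mul]
      · rw [dfall_one_nat_zero hgt, mul_zero]
    case h2 =>
      intro hkk
      exact absurd (Finset.mem_range.mpr hk) hkk

lemma jdfall (j : ℕ) (y : ℝ) :
    (j : ℝ) * dfall 1 y j = y * (dfall 1 y j - dfall 1 (y - 1) j) := by
  cases j with
  | zero => rw [dfall_zero, dfall_zero]; push_cast; ring
  | succ j =>
    rw [dfall_succ' 1 y j, dfall_succ 1 (y-1) j]
    push_cast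
    ring

lemma xpow (j : ℕ) (x : ℝ) : x * ((j : ℝ) * x ^ (j - 1)) = (j : ℝ) * x ^ j := by
  cases j with
  | zero => simp
  | succ j => push_cast; ring

lemma deriv_F (S : ℕ → ℕ → ℝ) (F : ℕ → ℝ → ℝ)
    (hF : ∀ (n : ℕ) (x : ℝ), F n x = ∑ k ∈ range (n + 1), S n k * (k.factorial : ℝ) * x ^ k)
    (k : ℕ) (x : ℝ) :
    deriv (F k) x = ∑ j ∈ range (k + 1), S k j * (j.factorial : ℝ) * ((j : ℝ) * x ^ (j - 1)) := by
  have hFk : F k = fun x => ∑ j ∈ range (k+1), S k j * (j.factorial : ℝ) * x ^ j :=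
    funext (hF k)
  rw [hFk]
  have : HasDerivAt (fun x : ℝ => ∑ j ∈ range (k+1), S k j * (j.factorial : ℝ) * x ^ j)
      (∑ j ∈ range (k+1), S k j * (j.factorial : ℝ) * ((j : ℝ) * x ^ (j - 1))) x := by
    apply HasDerivAt.fun_sum
    intro j _
    exact (hasDerivAt_pow j x).const_mul _
  exact this.deriv

/-- `S` truncated below the diagonal. -/
noncomputable def Saux (S : ℕ → ℕ → ℝ) (k j : ℕ) : ℝ := if j ≤ k then S k j else 0

theorem stmt19 (lam : ℝ) (S : ℕ → ℕ → ℝ)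
    (hS : ∀ (n : ℕ) (x : ℝ), dfall lam x n = ∑ k ∈ Finset.range (n + 1), S n k * dfall 1 x k)
    (F : ℕ → ℝ → ℝ)
    (hF : ∀ (n : ℕ) (x : ℝ), F n x = ∑ k ∈ Finset.range (n + 1), S n k * (k.factorial : ℝ) * x ^ k) (n : ℕ) (hn : 1 ≤ n) (x : ℝ) :
    ∑ k ∈ Finset.Icc 1 n, (n.choose (k - 1) : ℝ) * dfall lam (1 - lam) (n - k) * F k x =
      ∑ k ∈ Finset.range (n + 1),
        (n.choose k : ℝ) * dfall lam (1 - lam) (n - k) * (x * deriv (F k) x) := by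
  classical
  -- the key swap lemma
  have expand2 : ∀ (c w : ℕ → ℝ) (s : Finset ℕ), (∀ k ∈ s, k ≤ n) →
      ∑ k ∈ s, c k * (∑ j ∈ range (k + 1), S k j * w j)
        = ∑ j ∈ range (n + 1), (∑ k ∈ s, c k * Saux S k j) * w j := by
    intro c w s hs
    have inner : ∀ k ∈ s, ∑ j ∈ range (k+1), S k j * w j
        = ∑ j ∈ range (n+1), Saux S k j * w j := by
      intro k hk
      rw [show ∑ j ∈ range (k+1), S k j * w j = ∑ j ∈ range (k+1), Saux S k j * w j from
        Finset.sum_congr rfl fun j hj => by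
          have hjk : j ≤ k := Nat.lt_succ_iff.mp (mem_range.mp hj)
          simp [Saux, hjk]]
      apply Finset.sum_subset (Finset.range_subset_range.mpr (by have := hs k hk; omega))
      intro j _ hj
      have hjk : ¬ j ≤ k := by
        simp only [Finset.mem_range] at hj; omega
      simp [Saux, hjk]
    calc ∑ k ∈ s, c k * (∑ j ∈ range (k+1), S k j * w j)
        = ∑ k ∈ s, ∑ j ∈ range (n+1), c k * Saux S k j * w j := by
          refine Finset.sum_congr rfl fun k hk => ?_
          rw [inner k hk, Finset.mul_sum]
          exact Finset.sum_congr rfl fun j _ => by ring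
      _ = ∑ j ∈ range (n+1), (∑ k ∈ s, c k * Saux S k j) * w j := by
          rw [Finset.sum_comm]
          exact Finset.sum_congr rfl fun j _ => by rw [Finset.sum_mul]
  set A : ℕ → ℝ := fun j => ∑ k ∈ Icc 1 n,
    (n.choose (k-1) : ℝ) * dfall lam (1-lam) (n-k) * Saux S k j with hAdef
  set B : ℕ → ℝ := fun j => ∑ k ∈ range (n+1),
    (n.choose k : ℝ) * dfall lam (1-lam) (n-k) * Saux S k j with hBdef
  -- P identity
  have hP : ∀ y : ℝ, ∑ j ∈ range (n+1), B j * dfall 1 y j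
      = dfall lam (y + (1 - lam)) n := by
    intro y
    have e2 : ∑ k ∈ range (n+1),
          ((n.choose k : ℝ) * dfall lam (1-lam) (n-k))
            * (∑ j ∈ range (k+1), S k j * dfall 1 y j)
        = ∑ j ∈ range (n+1), (∑ k ∈ range (n+1),
            (n.choose k : ℝ) * dfall lam (1-lam) (n-k) * Saux S k j) * dfall 1 y j :=
      expand2 (fun k => (n.choose k : ℝ) * dfall lam (1-lam) (n-k))
        (fun j => dfall 1 y j) (range (n+1))
        (fun k hk => Nat.lt_succ_iff.mp (mem_range.mp hk))
    rw [dfall_vander lam y (1-lam) n]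
    rw [show (∑ k ∈ range (n+1), (n.choose k : ℝ) * dfall lam y k * dfall lam (1-lam) (n-k))
        = ∑ k ∈ range (n+1), ((n.choose k : ℝ) * dfall lam (1-lam) (n-k))
            * (∑ j ∈ range (k+1), S k j * dfall 1 y j) from
      Finset.sum_congr rfl fun k _ => by rw [← hS k y]; ring]
    rw [e2]
  -- Q identity
  have hQ : ∀ y : ℝ, ∑ j ∈ range (n+1), A j * dfall 1 y j
      = y * (dfall lam (y + (1 - lam)) n - dfall lam ((y - 1) + (1 - lam)) n) := by
    intro y
    have e2 : ∑ k ∈ Icc 1 n,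
          ((n.choose (k-1) : ℝ) * dfall lam (1-lam) (n-k))
            * (∑ j ∈ range (k+1), S k j * dfall 1 y j)
        = ∑ j ∈ range (n+1), (∑ k ∈ Icc 1 n,
            (n.choose (k-1) : ℝ) * dfall lam (1-lam) (n-k) * Saux S k j) * dfall 1 y j :=
      expand2 (fun k => (n.choose (k-1) : ℝ) * dfall lam (1-lam) (n-k))
        (fun j => dfall 1 y j) (Icc 1 n) (fun k hk => (mem_Icc.mp hk).2)
    have step1 : ∑ k ∈ Icc 1 n, ((n.choose (k-1) : ℝ) * dfall lam (1-lam) (n-k))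
          * (∑ j ∈ range (k+1), S k j * dfall 1 y j)
        = ∑ k ∈ Icc 1 n, (n.choose (k-1) : ℝ) * dfall lam (1-lam) (n-k) * dfall lam y k :=
      Finset.sum_congr rfl fun k _ => by rw [← hS k y]
    have step2 : ∑ k ∈ Icc 1 n, (n.choose (k-1) : ℝ) * dfall lam (1-lam) (n-k) * dfall lam y k
        = ∑ m ∈ range n, (n.choose m : ℝ) * dfall lam (1-lam) (n-1-m)
            * (y * dfall lam (y - lam) m) := by
      rw [show Icc 1 n = Ico 1 (n+1) from rfl, Finset.sum_Ico_eq_sum_range]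
      simp only [Nat.add_sub_cancel_left, Nat.add_sub_cancel]
      refine Finset.sum_congr rfl fun m _ => ?_
      have e2 : n - (1 + m) = n - 1 - m := by omega
      rw [e2, show 1 + m = m + 1 from by omega, dfall_succ']
    have hz : dfall lam ((y - lam) + 1) n
        = (∑ m ∈ range n, (n.choose m : ℝ) * dfall lam (1-lam) (n-1-m)
            * dfall lam (y - lam) m) + dfall lam (y - lam) n := by
      rw [dfall_vander lam (y - lam) 1 n, Finset.sum_range_succ]
      simp only [Nat.choose_self, Nat.cast_one, Nat.sub_self, dfall_zero, one_mul, mul_one]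
      congr 1
      refine Finset.sum_congr rfl fun m hm => ?_
      have hm' : m < n := mem_range.mp hm
      have e3 : n - m = (n - 1 - m) + 1 := by omega
      rw [e3, dfall_succ' lam 1 (n-1-m), one_mul]
      have e5 : (1 : ℝ) - lam = 1 - lam := rfl
      ring
    have goal2 : ∑ m ∈ range n, (n.choose m : ℝ) * dfall lam (1-lam) (n-1-m)
            * (y * dfall lam (y - lam) m)
        = y * (dfall lam ((y - lam) + 1) n - dfall lam (y - lam) n) := by
      rw [hz, add_sub_cancel_right, Finset.mul_sum]
      exact Finset.sum_congr rfl fun m _ => by ring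
    have eA : (y - lam) + 1 = y + (1 - lam) := by ring
    have eB : (y - 1) + (1 - lam) = y - lam := by ring
    calc ∑ j ∈ range (n+1), A j * dfall 1 y j
        = ∑ j ∈ range (n+1), (∑ k ∈ Icc 1 n,
            (n.choose (k-1) : ℝ) * dfall lam (1-lam) (n-k) * Saux S k j) * dfall 1 y j := by
          simp only [hAdef]
      _ = ∑ k ∈ Icc 1 n, ((n.choose (k-1) : ℝ) * dfall lam (1-lam) (n-k))
            * (∑ j ∈ range (k+1), S k j * dfall 1 y j) := e2.symm
      _ = y * (dfall lam ((y - lam) + 1) n - dfall lam (y - lam) n) := by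
          rw [step1, step2, goal2]
      _ = y * (dfall lam (y + (1 - lam)) n - dfall lam ((y - 1) + (1 - lam)) n) := by
          rw [eA, eB]
  -- A j = j * B j
  have hAB : ∀ j, j < n + 1 → A j - (j : ℝ) * B j = 0 := by
    apply dfall_indep
    intro y
    have e1 : ∑ j ∈ range (n+1), (j : ℝ) * B j * dfall 1 y j
        = y * (dfall lam (y + (1-lam)) n - dfall lam ((y-1) + (1-lam)) n) := by
      have t : ∀ j ∈ range (n+1), (j : ℝ) * B j * dfall 1 y j
          = y * (B j * dfall 1 y j) - y * (B j * dfall 1 (y-1) j) := by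
        intro j _
        calc (j : ℝ) * B j * dfall 1 y j = B j * ((j : ℝ) * dfall 1 y j) := by ring
          _ = B j * (y * (dfall 1 y j - dfall 1 (y-1) j)) := by rw [jdfall]
          _ = y * (B j * dfall 1 y j) - y * (B j * dfall 1 (y-1) j) := by ring
      rw [Finset.sum_congr rfl t, Finset.sum_sub_distrib, ← Finset.mul_sum, ← Finset.mul_sum,
        hP y, hP (y-1), mul_sub]
    have e2 : ∑ j ∈ range (n+1), (A j - (j : ℝ) * B j) * dfall 1 y j
        = (∑ j ∈ range (n+1), A j * dfall 1 y j)
          - ∑ j ∈ range (n+1), (j : ℝ) * B j * dfall 1 y j := by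
      rw [← Finset.sum_sub_distrib]
      exact Finset.sum_congr rfl fun j _ => by ring
    rw [e2, e1, hQ y, sub_self]
  -- final assembly
  have hL : ∑ k ∈ Icc 1 n, (n.choose (k-1) : ℝ) * dfall lam (1-lam) (n-k) * F k x
      = ∑ j ∈ range (n+1), A j * ((j.factorial : ℝ) * x ^ j) := by
    have e : ∀ k ∈ Icc 1 n,
        (n.choose (k-1) : ℝ) * dfall lam (1-lam) (n-k) * F k x
          = ((n.choose (k-1) : ℝ) * dfall lam (1-lam) (n-k))
            * (∑ j ∈ range (k+1), S k j * ((j.factorial : ℝ) * x ^ j)) := by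
      intro k _
      rw [hF k x, Finset.mul_sum, Finset.mul_sum]
      exact Finset.sum_congr rfl fun j _ => by ring
    have e2 : ∑ k ∈ Icc 1 n, ((n.choose (k-1) : ℝ) * dfall lam (1-lam) (n-k))
          * (∑ j ∈ range (k+1), S k j * ((j.factorial : ℝ) * x ^ j))
        = ∑ j ∈ range (n+1), (∑ k ∈ Icc 1 n,
            (n.choose (k-1) : ℝ) * dfall lam (1-lam) (n-k) * Saux S k j)
          * ((j.factorial : ℝ) * x ^ j) :=
      expand2 (fun k => (n.choose (k-1) : ℝ) * dfall lam (1-lam) (n-k))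
        (fun j => (j.factorial : ℝ) * x ^ j) (Icc 1 n) (fun k hk => (mem_Icc.mp hk).2)
    rw [Finset.sum_congr rfl e, e2]
  have hR : ∑ k ∈ range (n+1), (n.choose k : ℝ) * dfall lam (1-lam) (n-k)
        * (x * deriv (F k) x)
      = ∑ j ∈ range (n+1), ((j : ℝ) * B j) * ((j.factorial : ℝ) * x ^ j) := by
    have hxF : ∀ k : ℕ, x * deriv (F k) x
        = ∑ j ∈ range (k+1), S k j * ((j.factorial : ℝ) * ((j : ℝ) * x ^ j)) := by
      intro k
      rw [deriv_F S F hF k x, Finset.mul_sum]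
      refine Finset.sum_congr rfl fun j _ => ?_
      rw [← xpow j x]; ring
    have e : ∀ k ∈ range (n+1),
        (n.choose k : ℝ) * dfall lam (1-lam) (n-k) * (x * deriv (F k) x)
          = ((n.choose k : ℝ) * dfall lam (1-lam) (n-k))
            * (∑ j ∈ range (k+1), S k j * ((j.factorial : ℝ) * ((j : ℝ) * x ^ j))) := by
      intro k _
      rw [hxF k]
    have e2 : ∑ k ∈ range (n+1), ((n.choose k : ℝ) * dfall lam (1-lam) (n-k))
          * (∑ j ∈ range (k+1), S k j * ((j.factorial : ℝ) * ((j : ℝ) * x ^ j)))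
        = ∑ j ∈ range (n+1), (∑ k ∈ range (n+1),
            (n.choose k : ℝ) * dfall lam (1-lam) (n-k) * Saux S k j)
          * ((j.factorial : ℝ) * ((j : ℝ) * x ^ j)) :=
      expand2 (fun k => (n.choose k : ℝ) * dfall lam (1-lam) (n-k))
        (fun j => (j.factorial : ℝ) * ((j : ℝ) * x ^ j)) (range (n+1))
        (fun k hk => Nat.lt_succ_iff.mp (mem_range.mp hk))
    rw [Finset.sum_congr rfl e, e2]
    simp only [hBdef]
    exact Finset.sum_congr rfl fun j _ => by ring
  rw [hL, hR]
  refine Finset.sum_congr rfl fun j hj => ?_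
  have := hAB j (mem_range.mp hj)
  have hAj : A j = (j : ℝ) * B j := by linarith
  rw [hAj]
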